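/- Suppose ‖[A_X(t), B_Y]‖ ≤ C|X| e^{−μ·dist(X,Y)} for all operators B_Y of norm at most 1 supported on the complement of the ball S of radius r around X, with dist(X, complement of S) ≥ r. Then the partial-trace approximation O' = (1/tr 1_{S̄}) tr_{S̄}(A_X(t)) ⊗ 1_{S̄} satisfies ‖A_X(t) − O'‖ ≤ C|X| e^{−μr}. -/

import Mathlib

open Matrix
open scoped Matrix.Norms.L2Operator Kronecker

/-!
Averaging `A` over a finite family of unitaries `U` acting on `H_{S̄}` alone, each of which
commutes with `A` up to `K`, moves `A` by at most `K`, since `A - U A U⋆ = [A, U] U⋆`.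
The Haar integral over the unitary group of `H_{S̄}` can be replaced by the finite
Weyl–Heisenberg group of shifts and characters of `Fin nSbar`: these unitaries form a
1-design, `∑ W M W⋆ = n · tr M · 1`, so the average of `U A U⋆` is exactly the normalized
partial trace `O'`.
-/

section CStarRing

variable {E : Type*} [NormedRing E] [StarRing E] [CStarRing E]

theorem norm_le_one_of_mem_unitary {U : E} (hU : U ∈ unitary E) : ‖U‖ ≤ 1 := by
  rcases subsingleton_or_nontrivial E with _ | _
  · simp [Subsingleton.elim U 0]
  · exact (CStarRing.norm_of_mem_unitary hU).le

theorem norm_sub_unitary_conj {U : E} (hU : U ∈ unitary E) (a : E) :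
    ‖a - U * a * star U‖ = ‖a * U - U * a‖ := by
  rw [← CStarRing.norm_mul_mem_unitary (a * U - U * a) (Unitary.star_mem hU), sub_mul,
    mul_assoc a, Unitary.mul_star_self_of_mem hU, mul_one]

theorem norm_sub_average_unitary_conj_le {𝕜 : Type*} [RCLike 𝕜] [NormedSpace 𝕜 E]
    {ι : Type*} [Fintype ι] [Nonempty ι] {U : ι → E} (hU : ∀ i, U i ∈ unitary E) (a : E)
    {K : ℝ} (hK : ∀ i, ‖a * U i - U i * a‖ ≤ K) :
    ‖a - (Fintype.card ι : 𝕜)⁻¹ • ∑ i, U i * a * star (U i)‖ ≤ K := by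
  have hcard : (Fintype.card ι : 𝕜) ≠ 0 := Nat.cast_ne_zero.mpr Fintype.card_ne_zero
  have hsum : a - (Fintype.card ι : 𝕜)⁻¹ • ∑ i, U i * a * star (U i) =
      (Fintype.card ι : 𝕜)⁻¹ • ∑ i, (a - U i * a * star (U i)) := by
    rw [Finset.sum_sub_distrib, smul_sub, Finset.sum_const, Finset.card_univ,
      ← Nat.cast_smul_eq_nsmul 𝕜, smul_smul, inv_mul_cancel₀ hcard, one_smul]
  calc ‖a - (Fintype.card ι : 𝕜)⁻¹ • ∑ i, U i * a * star (U i)‖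
      ≤ (Fintype.card ι : ℝ)⁻¹ * ∑ i, ‖a - U i * a * star (U i)‖ := by
        rw [hsum, norm_smul, norm_inv, RCLike.norm_natCast]
        gcongr
        exact norm_sum_le _ _
    _ ≤ (Fintype.card ι : ℝ)⁻¹ * ∑ _i : ι, K := by
        gcongr with i
        exact (norm_sub_unitary_conj (hU i) a).trans_le (hK i)
    _ = K := by
        rw [Finset.sum_const, Finset.card_univ, nsmul_eq_mul, inv_mul_cancel_left₀]
        exact Nat.cast_ne_zero.mpr Fintype.card_ne_zero

end CStarRing

namespace Matrix

section PartialTrace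

variable {ι m m' n R : Type*} [Fintype n] [CommSemiring R]

def traceRight (A : Matrix (m × n) (m' × n) R) : Matrix m m' R :=
  of fun s s' => ∑ x, A (s, x) (s', x)

variable [Fintype m] [DecidableEq m] [StarRing R]

theorem one_kronecker_mul_mul_conjTranspose_apply (W : Matrix n n R)
    (A : Matrix (m × n) (m × n) R) (s s' : m) (j k : n) :
    (((1 : Matrix m m R) ⊗ₖ W) * A * ((1 : Matrix m m R) ⊗ₖ W)ᴴ) (s, j) (s', k) =
      (W * of (fun x y => A (s, x) (s', y)) * Wᴴ) j k := by
  simp [mul_apply, Fintype.sum_prod_type, one_apply, ite_mul, apply_ite star, mul_ite,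
    Finset.sum_ite_irrel]

theorem sum_one_kronecker_mul_mul_conjTranspose [Fintype ι] [DecidableEq n]
    (W : ι → Matrix n n R) (c : R) (hW : ∀ M, ∑ i, W i * M * (W i)ᴴ = (c * M.trace) • 1)
    (A : Matrix (m × n) (m × n) R) :
    ∑ i, ((1 : Matrix m m R) ⊗ₖ W i) * A * ((1 : Matrix m m R) ⊗ₖ W i)ᴴ =
      c • (traceRight A ⊗ₖ 1) := by
  ext ⟨s, j⟩ ⟨s', k⟩
  rw [Matrix.sum_apply]
  simp only [one_kronecker_mul_mul_conjTranspose_apply, ← Matrix.sum_apply, hW]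
  simp [traceRight, trace, mul_assoc]

end PartialTrace

section Weyl

variable {G : Type*} [AddCommGroup G] [Fintype G] [DecidableEq G]

/-- The clock-and-shift operator `X^a Z_ψ`. -/
noncomputable def weylMatrix (a : G) (ψ : AddChar G ℂ) : Matrix G G ℂ :=
  of fun j k => if k = j - a then ψ k else 0

theorem weylMatrix_mul_mul_conjTranspose_apply (a : G) (ψ : AddChar G ℂ) (M : Matrix G G ℂ)
    (j k : G) :
    (weylMatrix a ψ * M * (weylMatrix a ψ)ᴴ) j k = ψ (j - k) * M (j - a) (k - a) := by
  have hψ : ψ (j - k) = ψ (j - a) * star (ψ (k - a)) := by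
    rw [show j - k = (j - a) + -(k - a) by abel, AddChar.map_add_eq_mul,
      AddChar.map_neg_eq_conj]
    rfl
  simp only [mul_apply, weylMatrix, conjTranspose_apply, of_apply, ite_mul, zero_mul,
    apply_ite star, star_zero, mul_ite, mul_zero, Finset.sum_ite_eq', Finset.mem_univ, if_true]
  rw [hψ]
  ring

theorem weylMatrix_mem_unitaryGroup (a : G) (ψ : AddChar G ℂ) :
    weylMatrix a ψ ∈ unitaryGroup G ℂ := by
  rw [mem_unitaryGroup_iff, star_eq_conjTranspose]
  ext j k
  have h := weylMatrix_mul_mul_conjTranspose_apply a ψ 1 j k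
  rw [Matrix.mul_one] at h
  rw [h]
  simp only [one_apply, sub_left_inj]
  split_ifs with hjk <;> simp [hjk]

/-- Character orthogonality kills the off-diagonal entries; the shifts then sweep the diagonal. -/
theorem sum_weylMatrix_mul_mul_conjTranspose (M : Matrix G G ℂ) :
    ∑ p : G × AddChar G ℂ, weylMatrix p.1 p.2 * M * (weylMatrix p.1 p.2)ᴴ =
      (Fintype.card G * M.trace) • 1 := by
  ext j k
  simp only [Matrix.sum_apply, weylMatrix_mul_mul_conjTranspose_apply, Fintype.sum_prod_type,
    ← Finset.sum_mul, AddChar.sum_apply_eq_ite, sub_eq_zero, Matrix.smul_apply, one_apply,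
    smul_eq_mul]
  split_ifs with hjk
  · subst hjk
    rw [← Finset.mul_sum, mul_one, trace]
    congr 1
    exact Fintype.sum_equiv (Equiv.subLeft j) _ _ fun _ => rfl
  · simp

end Weyl

end Matrix

theorem partial_trace_approximation_of_LRB_general {nS nSbar : ℕ} (hSbar : 0 < nSbar)
    (A : Matrix (Fin nS × Fin nSbar) (Fin nS × Fin nSbar) ℂ)
    (C μ r : ℝ) (X : ℕ)
    (hLRB : ∀ b : Matrix (Fin nSbar) (Fin nSbar) ℂ,
      ‖((1 : Matrix (Fin nS) (Fin nS) ℂ) ⊗ₖ b)‖ ≤ 1 →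
      ‖A * ((1 : Matrix (Fin nS) (Fin nS) ℂ) ⊗ₖ b)
          - ((1 : Matrix (Fin nS) (Fin nS) ℂ) ⊗ₖ b) * A‖ ≤ C * X * Real.exp (-μ * r))
    (O' : Matrix (Fin nS × Fin nSbar) (Fin nS × Fin nSbar) ℂ)
    (hO' : O' = ((1 : ℂ) / (nSbar : ℂ)) •
      ((Matrix.of fun a a' : Fin nS => ∑ c : Fin nSbar, A (a, c) (a', c)) ⊗ₖ
        (1 : Matrix (Fin nSbar) (Fin nSbar) ℂ))) :
    ‖A - O'‖ ≤ C * X * Real.exp (-μ * r) := by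
  have : NeZero nSbar := ⟨hSbar.ne'⟩
  set U : Fin nSbar × AddChar (Fin nSbar) ℂ →
      Matrix (Fin nS × Fin nSbar) (Fin nS × Fin nSbar) ℂ :=
    fun p => (1 : Matrix (Fin nS) (Fin nS) ℂ) ⊗ₖ weylMatrix p.1 p.2
  have hU : ∀ p, U p ∈ unitary _ := fun p =>
    kronecker_mem_unitary (one_mem _) (weylMatrix_mem_unitaryGroup p.1 p.2)
  have hO'_avg : O' = (Fintype.card (Fin nSbar × AddChar (Fin nSbar) ℂ) : ℂ)⁻¹ •
      ∑ p, U p * A * star (U p) := by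
    simp only [U, star_eq_conjTranspose]
    rw [sum_one_kronecker_mul_mul_conjTranspose _ _ sum_weylMatrix_mul_mul_conjTranspose, hO',
      smul_smul, Fintype.card_prod, AddChar.card_eq, Fintype.card_fin]
    congr 1
    push_cast
    field_simp
  rw [hO'_avg]
  exact norm_sub_average_unitary_conj_le hU A fun p => hLRB _ (norm_le_one_of_mem_unitary (hU p))

/-- if the Heisenberg-evolved operator `A_X(t)` on `H_S ⊗ H_{S̄}` satisfies
the Lieb-Robinson bound `‖[A_X(t), B]‖ ≤ C |X| e^{−μ r}` for all norm-one operators `B`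
supported on the complement `S̄` of the radius-`r` ball `S` around `X` (i.e. of the form
`1_S ⊗ b`), then the normalized-partial-trace approximation
`O' = (tr_{S̄} A_X(t) ⊗ 1_{S̄}) / tr(1_{S̄})` satisfies `‖A_X(t) − O'‖ ≤ C |X| e^{−μ r}`. -/
theorem partial_trace_approximation_of_LRB {nS nSbar : ℕ} (hSbar : 0 < nSbar)
    (A : Matrix (Fin nS × Fin nSbar) (Fin nS × Fin nSbar) ℂ)
    (hA : ‖A‖ ≤ 1)
    (C μ r : ℝ) (hC : 0 < C) (hμ : 0 < μ) (hr : 0 ≤ r) (X : ℕ)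
    (hLRB : ∀ b : Matrix (Fin nSbar) (Fin nSbar) ℂ,
      ‖((1 : Matrix (Fin nS) (Fin nS) ℂ) ⊗ₖ b)‖ ≤ 1 →
      ‖A * ((1 : Matrix (Fin nS) (Fin nS) ℂ) ⊗ₖ b)
          - ((1 : Matrix (Fin nS) (Fin nS) ℂ) ⊗ₖ b) * A‖ ≤ C * X * Real.exp (-μ * r))
    (O' : Matrix (Fin nS × Fin nSbar) (Fin nS × Fin nSbar) ℂ)
    (hO' : O' = ((1 : ℂ) / (nSbar : ℂ)) •
      ((Matrix.of fun a a' : Fin nS => ∑ c : Fin nSbar, A (a, c) (a', c)) ⊗ₖ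
        (1 : Matrix (Fin nSbar) (Fin nSbar) ℂ))) :
    ‖A - O'‖ ≤ C * X * Real.exp (-μ * r) :=
  partial_trace_approximation_of_LRB_general hSbar A C μ r X hLRB O' hO'
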